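/- Let M, d be real numbers with d ≠ 0, let j = (M/3, M/3, M/3) in EuclideanSpace ℝ (Fin 3), and consider the six points obtained by applying all permutations of coordinates to the point (M/3 + d, M/3, M/3 − d). These six points are pairwise distinct, each lies in the plane x + y + z = M, each is at distance √2·|d| from j, and they can be enumerated as p₁, …, p₆ so that dist pᵢ p_{i+1} = √2·|d| for all i (indices cyclic mod 6); hence they form a regular hexagon with barycenter j. -/

import Mathlib

/-!
Permuting coordinates is a linear isometry of Euclidean space that preserves the coordinate sum
and fixes the diagonal, so each permuted point lies on the plane `x + y + z = M` at distance
`dist p₀ j = √2 |d|` from `j`. Listing the permutations as `σₖ₊₁ = s σₖ`, with `s` alternating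
between the transpositions `(0 1)` and `(1 2)`, consecutive points differ by exchanging the two
entries of values `M/3 + d, M/3` or `M/3, M/3 - d`, hence are `√2 |d|` apart; the list closes up
after six steps because `(1 2)(0 1)` has order three.
-/

open Equiv

namespace EuclideanSpace

variable {ι : Type*} [Fintype ι]

noncomputable def permCoords (σ : Perm ι) : EuclideanSpace ℝ ι ≃ₗᵢ[ℝ] EuclideanSpace ℝ ι :=
  LinearIsometryEquiv.piLpCongrLeft 2 ℝ ℝ σ.symm

@[simp]
theorem permCoords_apply (σ : Perm ι) (x : EuclideanSpace ℝ ι) (i : ι) :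
    permCoords σ x i = x (σ i) := rfl

theorem permCoords_mul (σ τ : Perm ι) (x : EuclideanSpace ℝ ι) :
    permCoords (σ * τ) x = permCoords τ (permCoords σ x) := rfl

theorem permCoords_const (σ : Perm ι) (c : ℝ) :
    permCoords σ (WithLp.toLp 2 fun _ => c) = WithLp.toLp 2 fun _ => c := rfl

theorem dist_permCoords_const (σ : Perm ι) (x : EuclideanSpace ℝ ι) (c : ℝ) :
    dist (permCoords σ x) (WithLp.toLp 2 fun _ => c) = dist x (WithLp.toLp 2 fun _ => c) := by
  rw [← (permCoords σ).dist_map x, permCoords_const]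

theorem sum_permCoords (σ : Perm ι) (x : EuclideanSpace ℝ ι) :
    ∑ i, permCoords σ x i = ∑ i, x i :=
  Equiv.sum_comp σ (x ·)

theorem permCoords_left_injective {x : EuclideanSpace ℝ ι} (hx : Function.Injective x) :
    Function.Injective fun σ : Perm ι => permCoords σ x := by
  intro σ τ h
  ext i
  exact congrArg (· i) (hx.comp_left (congrArg WithLp.ofLp h :))

theorem dist_permCoords_swap [DecidableEq ι] (x : EuclideanSpace ℝ ι) {i j : ι} (hij : i ≠ j) :
    dist (permCoords (swap i j) x) x = √2 * |x i - x j| := by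
  rw [EuclideanSpace.dist_eq, Fintype.sum_eq_add i j hij]
  · simp only [permCoords_apply, swap_apply_left, swap_apply_right, Real.dist_eq, sq_abs]
    rw [sub_sq_comm, ← two_mul, Real.sqrt_mul zero_le_two, Real.sqrt_sq_eq_abs]
  · rintro k ⟨hki, hkj⟩
    simp [swap_apply_of_ne_of_ne hki hkj]

end EuclideanSpace

open EuclideanSpace

def hexagonPerm : Fin 6 → Perm (Fin 3) :=
  ![1, swap 0 1, swap 1 2 * swap 0 1, swap 0 1 * swap 1 2 * swap 0 1,
    swap 1 2 * swap 0 1 * swap 1 2 * swap 0 1, swap 0 1 * swap 1 2 * swap 0 1 * swap 1 2 * swap 0 1]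

theorem hexagonPerm_bijective : Function.Bijective hexagonPerm := by decide

theorem hexagonPerm_succ (k : Fin 6) :
    hexagonPerm (k + 1) = swap 0 1 * hexagonPerm k ∨
      hexagonPerm (k + 1) = swap 1 2 * hexagonPerm k := by
  revert k
  decide

theorem dist_permCoords_hexagonPerm_succ (x : EuclideanSpace ℝ (Fin 3)) (k : Fin 6) :
    dist (permCoords (hexagonPerm (k + 1)) x) (permCoords (hexagonPerm k) x) = √2 * |x 0 - x 1| ∨
      dist (permCoords (hexagonPerm (k + 1)) x) (permCoords (hexagonPerm k) x) =
        √2 * |x 1 - x 2| := by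
  rcases hexagonPerm_succ k with h | h <;> rw [h, permCoords_mul, LinearIsometryEquiv.dist_map]
  · exact .inl (dist_permCoords_swap x (by decide))
  · exact .inr (dist_permCoords_swap x (by decide))

theorem arithProg_three_injective {a d : ℝ} (hd : d ≠ 0) :
    Function.Injective ![a + d, a, a - d] := by
  intro i j h
  fin_cases i <;> fin_cases j <;> simp at h ⊢ <;> exact hd (by linarith)

theorem diagonal_trajectory_is_regular_hexagon
    (M d : ℝ) (hd : d ≠ 0)
    (j : EuclideanSpace ℝ (Fin 3)) (hj : j = ![M / 3, M / 3, M / 3])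
    (p₀ : EuclideanSpace ℝ (Fin 3)) (hp₀ : p₀ = ![M / 3 + d, M / 3, M / 3 - d]) :
    ∃ p : Fin 6 → EuclideanSpace ℝ (Fin 3),
      Function.Injective p ∧
      Set.range p = {q : EuclideanSpace ℝ (Fin 3) |
        ∃ σ : Equiv.Perm (Fin 3), q = fun i => p₀ (σ i)} ∧
      (∀ i : Fin 6, p i 0 + p i 1 + p i 2 = M) ∧
      (∀ i : Fin 6, dist (p i) j = Real.sqrt 2 * |d|) ∧
      (∀ i : Fin 6, dist (p i) (p (i + 1)) = Real.sqrt 2 * |d|) := by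
  have hp₀i : ∀ i, p₀ i = ![M / 3 + d, M / 3, M / 3 - d] i := congrFun hp₀
  have hj_const : j = WithLp.toLp 2 fun _ => M / 3 := by
    ext i
    fin_cases i <;> simp [hj]
  refine ⟨fun k => permCoords (hexagonPerm k) p₀, ?_, ?_, fun k => ?_, fun k => ?_, fun k => ?_⟩
  · refine (permCoords_left_injective ?_).comp hexagonPerm_bijective.injective
    rw [hp₀]
    exact arithProg_three_injective hd
  · ext q
    rw [Set.mem_range, Set.mem_ofPred_eq, hexagonPerm_bijective.surjective.exists]
    exact exists_congr fun k => by rw [eq_comm, ← (WithLp.ofLp_injective 2).eq_iff]; rfl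
  · rw [← Fin.sum_univ_three (permCoords _ p₀ ·), sum_permCoords, Fin.sum_univ_three]
    simp only [hp₀i, Matrix.cons_val]
    ring
  · rw [hj_const, dist_permCoords_const, EuclideanSpace.dist_eq, Fin.sum_univ_three]
    simp only [hp₀i, Matrix.cons_val, Real.dist_eq, sq_abs]
    rw [show (M / 3 + d - M / 3) ^ 2 + (M / 3 - M / 3) ^ 2 + (M / 3 - d - M / 3) ^ 2 = 2 * d ^ 2 by
      ring, Real.sqrt_mul zero_le_two, Real.sqrt_sq_eq_abs]
  · rw [dist_comm]
    rcases dist_permCoords_hexagonPerm_succ p₀ k with h | h <;> rw [h] <;> simp [hp₀i]
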